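/- Let A ∈ ℂ^{m×N}, λ > 0, and B = (m + mλ)^{-1/2} [A; √(mλ) I_N]. If the s-th restricted isometry constant of m^{-1/2} A satisfies δ_s(m^{-1/2}A) ≤ δ, then the s-th restricted isometry constant of B satisfies δ_s(B) ≤ δ/(1+λ). In particular δ_s(B) < δ_s(m^{-1/2}A) whenever δ_s(m^{-1/2}A) > 0. -/

import Mathlib

noncomputable section
open scoped BigOperators
open Matrix
/-- Squared Euclidean norm of a complex vector. -/
def sqNorm {n : Type*} [Fintype n] (v : n → ℂ) : ℝ := ∑ i, ‖v i‖ ^ 2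
/-- Euclidean norm of a complex vector. -/
def eNorm {n : Type*} [Fintype n] (v : n → ℂ) : ℝ := Real.sqrt (sqNorm v)
/-- ℓ¹ norm of a complex vector. -/
def l1Norm {n : Type*} [Fintype n] (v : n → ℂ) : ℝ := ∑ i, ‖v i‖
/-- A vector is `s`-sparse if it has at most `s` nonzero entries. -/
def IsSparse {n : Type*} [Fintype n] (s : ℕ) (v : n → ℂ) : Prop :=
  ∃ T : Finset n, T.card ≤ s ∧ ∀ i ∉ T, v i = 0
/-- ℓ¹ distance to the best s-term approximation. -/
def kappa {n : Type*} [Fintype n] (s : ℕ) (x : n → ℂ) : ℝ :=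
  sInf {r : ℝ | ∃ z : n → ℂ, IsSparse s z ∧ r = l1Norm (z - x)}
/-- Operator norm induced by the Euclidean norms. -/
def opNorm {m n : Type*} [Fintype m] [Fintype n] [DecidableEq n] (M : Matrix m n ℂ) : ℝ :=
  ‖LinearMap.toContinuousLinearMap (Matrix.toEuclideanLin M)‖
/-- Submatrix of columns indexed by `S`. -/
def colSub {m : Type*} {N : ℕ} (M : Matrix m (Fin N) ℂ) (S : Finset (Fin N)) :
    Matrix m {j // j ∈ S} ℂ := M.submatrix id (fun j => j.1)
/-- Augmented matrix `[A; √(mλ) I_N]`. -/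
def aug {m N : ℕ} (A : Matrix (Fin m) (Fin N) ℂ) (lam : ℝ) :
    Matrix (Fin m ⊕ Fin N) (Fin N) ℂ :=
  Matrix.fromRows A (((Real.sqrt ((m : ℝ) * lam) : ℝ) : ℂ) • (1 : Matrix (Fin N) (Fin N) ℂ))
/-- s-th restricted isometry constant. -/
def ric {m n : Type*} [Fintype m] [Fintype n] (s : ℕ) (M : Matrix m n ℂ) : ℝ :=
  sInf {δ : ℝ | 0 ≤ δ ∧ ∀ x : n → ℂ, IsSparse s x →
    (1 - δ) * sqNorm x ≤ sqNorm (M.mulVec x) ∧ sqNorm (M.mulVec x) ≤ (1 + δ) * sqNorm x}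

lemma sqNorm_nonneg' {n : Type*} [Fintype n] (v : n → ℂ) : 0 ≤ sqNorm v :=
  Finset.sum_nonneg fun _ _ => pow_nonneg (norm_nonneg _) 2

lemma sqNorm_smul' {n : Type*} [Fintype n] (c : ℂ) (v : n → ℂ) :
    sqNorm (c • v) = ‖c‖^2 * sqNorm v := by
  simp [sqNorm, Finset.mul_sum, mul_pow]

lemma sqNorm_elim' {m n : Type*} [Fintype m] [Fintype n] (f : m → ℂ) (g : n → ℂ) :
    sqNorm (Sum.elim f g) = sqNorm f + sqNorm g := by
  simp [sqNorm, Fintype.sum_sum_type]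

lemma sqNorm_mulVec_le {p q : Type*} [Fintype p] [Fintype q] (M : Matrix p q ℂ) (x : q → ℂ) :
    sqNorm (M.mulVec x) ≤ (∑ i, (∑ j, ‖M i j‖)^2) * sqNorm x := by
  have hq : 0 ≤ sqNorm x := sqNorm_nonneg' x
  have hx : ∀ j, ‖x j‖ ≤ Real.sqrt (sqNorm x) := fun j => by
    rw [show ‖x j‖ = Real.sqrt (‖x j‖^2) from (Real.sqrt_sq (norm_nonneg _)).symm]
    exact Real.sqrt_le_sqrt (Finset.single_le_sum
      (fun i _ => pow_nonneg (norm_nonneg _) 2) (Finset.mem_univ j))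
  rw [sqNorm, Finset.sum_mul]
  apply Finset.sum_le_sum
  intro i _
  have h1 : ‖M.mulVec x i‖ ≤ (∑ j, ‖M i j‖) * Real.sqrt (sqNorm x) := by
    calc ‖M.mulVec x i‖ ≤ ∑ j, ‖M i j * x j‖ := by
          rw [Matrix.mulVec, dotProduct]; exact norm_sum_le _ _
      _ ≤ ∑ j, ‖M i j‖ * Real.sqrt (sqNorm x) := by
          refine Finset.sum_le_sum fun j _ => ?_
          rw [norm_mul]; exact mul_le_mul_of_nonneg_left (hx j) (norm_nonneg _)
      _ = (∑ j, ‖M i j‖) * Real.sqrt (sqNorm x) := by rw [Finset.sum_mul]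
  calc ‖M.mulVec x i‖^2 ≤ ((∑ j, ‖M i j‖) * Real.sqrt (sqNorm x))^2 :=
        pow_le_pow_left₀ (norm_nonneg _) h1 2
    _ = (∑ j, ‖M i j‖)^2 * sqNorm x := by rw [mul_pow, Real.sq_sqrt hq]

lemma sqNorm_B_key {m N : ℕ} (hm : 1 ≤ m) (A : Matrix (Fin m) (Fin N) ℂ)
    (lam : ℝ) (hlam : 0 < lam) (x : Fin N → ℂ) :
    sqNorm ((((((Real.sqrt ((m : ℝ) + (m : ℝ) * lam) : ℝ) : ℂ))⁻¹ • aug A lam)).mulVec x)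
      = (sqNorm ((((((Real.sqrt (m : ℝ) : ℝ) : ℂ))⁻¹ • A)).mulVec x) + lam * sqNorm x)
        / (1 + lam) := by
  have hm0 : (0:ℝ) < m := by exact_mod_cast Nat.lt_of_lt_of_le Nat.zero_lt_one hm
  have h1 : (0:ℝ) < (m:ℝ) + m * lam := by nlinarith
  have h2 : (0:ℝ) ≤ (m:ℝ) * lam := by positivity
  rw [Matrix.smul_mulVec, sqNorm_smul', Matrix.smul_mulVec, sqNorm_smul']
  rw [aug, Matrix.fromRows_mulVec, sqNorm_elim', Matrix.smul_mulVec,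
    Matrix.one_mulVec, sqNorm_smul']
  have e1 : ‖((((Real.sqrt ((m : ℝ) + (m : ℝ) * lam)) : ℝ) : ℂ))⁻¹‖^2 = ((m:ℝ) + m*lam)⁻¹ := by
    rw [norm_inv, Complex.norm_real, Real.norm_of_nonneg (Real.sqrt_nonneg _), ← Real.sqrt_inv,
      Real.sq_sqrt (by positivity)]
  have e2 : ‖(((Real.sqrt (m : ℝ)) : ℝ) : ℂ)⁻¹‖^2 = ((m:ℝ))⁻¹ := by
    rw [norm_inv, Complex.norm_real, Real.norm_of_nonneg (Real.sqrt_nonneg _), ← Real.sqrt_inv,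
      Real.sq_sqrt (by positivity)]
  have e3 : ‖(((Real.sqrt ((m:ℝ) * lam)) : ℝ) : ℂ)‖^2 = (m:ℝ) * lam := by
    rw [Complex.norm_real, Real.norm_of_nonneg (Real.sqrt_nonneg _), Real.sq_sqrt h2]
  rw [e1, e2, e3]
  field_simp

/-- if `δ_s(m^{-1/2} A) ≤ δ` then `δ_s(B) ≤ δ/(1+λ)`, and in particular
`δ_s(B) < δ_s(m^{-1/2} A)` whenever the latter is positive. -/
theorem stmt2 {m N : ℕ} (hm : 1 ≤ m) (A : Matrix (Fin m) (Fin N) ℂ)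
    (lam : ℝ) (hlam : 0 < lam) (s : ℕ)
    (B : Matrix (Fin m ⊕ Fin N) (Fin N) ℂ)
    (hB : B = (((Real.sqrt ((m : ℝ) + (m : ℝ) * lam) : ℝ) : ℂ))⁻¹ • aug A lam)
    (A' : Matrix (Fin m) (Fin N) ℂ)
    (hA' : A' = (((Real.sqrt (m : ℝ) : ℝ) : ℂ))⁻¹ • A) :
    (∀ δ : ℝ, ric s A' ≤ δ → ric s B ≤ δ / (1 + lam)) ∧
    (0 < ric s A' → ric s B < ric s A') := by
  have honelam : (0:ℝ) < 1 + lam := by linarith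
  set SA := {δ : ℝ | 0 ≤ δ ∧ ∀ x : Fin N → ℂ, IsSparse s x →
    (1 - δ) * sqNorm x ≤ sqNorm (A'.mulVec x) ∧ sqNorm (A'.mulVec x) ≤ (1 + δ) * sqNorm x}
    with hSA
  set SB := {δ : ℝ | 0 ≤ δ ∧ ∀ x : Fin N → ℂ, IsSparse s x →
    (1 - δ) * sqNorm x ≤ sqNorm (B.mulVec x) ∧ sqNorm (B.mulVec x) ≤ (1 + δ) * sqNorm x}
    with hSB
  have hricA : ric s A' = sInf SA := rfl
  have hricB : ric s B = sInf SB := rfl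
  have hkey : ∀ x : Fin N → ℂ,
      sqNorm (B.mulVec x) = (sqNorm (A'.mulVec x) + lam * sqNorm x) / (1 + lam) := by
    intro x; rw [hB, hA']; exact sqNorm_B_key hm A lam hlam x
  -- SA is upward closed
  have hup : ∀ δ ∈ SA, ∀ δ', δ ≤ δ' → δ' ∈ SA := by
    intro δ hδ δ' hle
    refine ⟨le_trans hδ.1 hle, fun x hx => ?_⟩
    obtain ⟨hl, hr⟩ := hδ.2 x hx
    have hq : 0 ≤ sqNorm x := sqNorm_nonneg' x
    constructor
    · nlinarith [mul_le_mul_of_nonneg_right hle hq]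
    · nlinarith [mul_le_mul_of_nonneg_right hle hq]
  -- map SA into SB
  have hmap : ∀ δ ∈ SA, δ / (1 + lam) ∈ SB := by
    intro δ hδ
    refine ⟨div_nonneg hδ.1 honelam.le, fun x hx => ?_⟩
    obtain ⟨hl, hr⟩ := hδ.2 x hx
    have hq : 0 ≤ sqNorm x := sqNorm_nonneg' x
    have ht : δ / (1 + lam) * (1 + lam) = δ := div_mul_cancel₀ _ (ne_of_gt honelam)
    have ht2 : δ / (1 + lam) * (1 + lam) * sqNorm x = δ * sqNorm x := by rw [ht]
    rw [hkey x]
    constructor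
    · rw [le_div_iff₀ honelam]; nlinarith [ht2]
    · rw [div_le_iff₀ honelam]; nlinarith [ht2]
  have hSBbdd : BddBelow SB := ⟨0, fun δ hδ => hδ.1⟩
  -- SA nonempty
  have hSAne : SA.Nonempty := by
    have hC0 : 0 ≤ ∑ i, (∑ j, ‖A' i j‖)^2 := Finset.sum_nonneg fun _ _ => sq_nonneg _
    refine ⟨1 + ∑ i, (∑ j, ‖A' i j‖)^2, by positivity, fun x _ => ?_⟩
    have hq : 0 ≤ sqNorm x := sqNorm_nonneg' x
    have hb := sqNorm_mulVec_le A' x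
    constructor
    · have h0 : (1 - (1 + ∑ i, (∑ j, ‖A' i j‖)^2)) * sqNorm x ≤ 0 := by nlinarith
      exact le_trans h0 (sqNorm_nonneg' _)
    · nlinarith
  have part1 : ∀ δ : ℝ, ric s A' ≤ δ → ric s B ≤ δ / (1 + lam) := by
    intro δ hδ
    apply le_of_forall_pos_le_add
    intro ε hε
    obtain ⟨δ', hδ'SA, hδ'lt⟩ := exists_lt_of_csInf_lt hSAne
      (show sInf SA < δ + ε * (1 + lam) by rw [← hricA]; nlinarith)
    have hmem : δ + ε * (1 + lam) ∈ SA := hup δ' hδ'SA _ (le_of_lt hδ'lt)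
    have := csInf_le hSBbdd (hmap _ hmem)
    rw [← hricB] at this
    calc ric s B ≤ (δ + ε * (1 + lam)) / (1 + lam) := this
      _ = δ / (1 + lam) + ε := by field_simp
  refine ⟨part1, fun hpos => ?_⟩
  calc ric s B ≤ ric s A' / (1 + lam) := part1 _ le_rfl
    _ < ric s A' := div_lt_self hpos (by linarith)
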